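/- Let 1 < p < ∞, z ∈ B_{ℓ_p}, and s > 0 with ‖z‖_p^p + s^p ≤ 1. Then w*-ac{δ_{z[n] + s e_m} : m > n ≥ 1} = w*-ac{δ_{z[m−1] + s e_m} : m ≥ 2}, as subsets of ℳ(𝒜_u(B_{ℓ_p})). -/

import Mathlib

open Metric Filter Set Topology ENNReal

noncomputable section

/-- Membership in the algebra `𝒜_u(B_X)` of holomorphic and uniformly continuous
functions on the open unit ball of `X`, each such function being identified with
its (unique) uniformly continuous extension to the closed unit ball. -/
def MemAu (X : Type*) [NormedAddCommGroup X] [NormedSpace ℂ X] (f : X → ℂ) : Prop :=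
  DifferentiableOn ℂ f (ball (0 : X) 1) ∧ UniformContinuousOn f (closedBall (0 : X) 1)

/-- The spectrum `ℳ(𝒜_u(B_X))`: nonzero multiplicative linear functionals on
`𝒜_u(B_X)` (such functionals automatically have norm at most one, which is the
content of the field `bound'`). -/
structure SpectrumAu (X : Type*) [NormedAddCommGroup X] [NormedSpace ℂ X] where
  toFun : ∀ f : X → ℂ, MemAu X f → ℂ
  ext' : ∀ f g hf hg, Set.EqOn f g (closedBall (0 : X) 1) → toFun f hf = toFun g hg
  map_add' : ∀ f g hf hg hfg, toFun (f + g) hfg = toFun f hf + toFun g hg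
  map_smul' : ∀ (c : ℂ) (f : X → ℂ) (hf) (hcf), toFun (c • f) hcf = c * toFun f hf
  map_mul' : ∀ f g hf hg hfg, toFun (f * g) hfg = toFun f hf * toFun g hg
  nonzero' : ∃ f hf, toFun f hf ≠ 0
  bound' : ∀ f hf C, (∀ x ∈ closedBall (0 : X) 1, ‖f x‖ ≤ C) → ‖toFun f hf‖ ≤ C

theorem memAu_one (X : Type*) [NormedAddCommGroup X] [NormedSpace ℂ X] :
    MemAu X (1 : X → ℂ) :=
  ⟨fun _ _ => differentiableWithinAt_const 1,
    uniformContinuous_const.mono_left inf_le_left⟩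

/-- The evaluation homomorphism at a point of the closed unit ball. -/
def evalHomCB {X : Type*} [NormedAddCommGroup X] [NormedSpace ℂ X]
    (x : X) (hx : ‖x‖ ≤ 1) : SpectrumAu X where
  toFun f _ := f x
  ext' := fun _ _ _ _ h => h (mem_closedBall_zero_iff.2 hx)
  map_add' := fun _ _ _ _ _ => rfl
  map_smul' := fun _ _ _ _ => rfl
  map_mul' := fun _ _ _ _ _ => rfl
  nonzero' := ⟨1, memAu_one X, one_ne_zero⟩
  bound' := fun _ _ _ hC => hC x (mem_closedBall_zero_iff.2 hx)

/-- The evaluation homomorphism `δ_x`; junk value for `x` outside the closed ball. -/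
def evalHom {X : Type*} [NormedAddCommGroup X] [NormedSpace ℂ X] (x : X) : SpectrumAu X :=
  if hx : ‖x‖ ≤ 1 then evalHomCB x hx else evalHomCB 0 (by simp)

/-- The Gleason distance `‖φ - ψ‖` in the dual of `𝒜_u(B_X)`. -/
def gleasonDist {X : Type*} [NormedAddCommGroup X] [NormedSpace ℂ X]
    (φ ψ : SpectrumAu X) : ℝ :=
  sSup {r : ℝ | ∃ (f : X → ℂ) (hf : MemAu X f),
    (∀ x ∈ closedBall (0 : X) 1, ‖f x‖ ≤ 1) ∧ r = ‖φ.toFun f hf - ψ.toFun f hf‖}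

/-- The Gleason part `𝒢𝒫(φ)`. -/
def gleasonPart {X : Type*} [NormedAddCommGroup X] [NormedSpace ℂ X]
    (φ : SpectrumAu X) : Set (SpectrumAu X) :=
  {ψ | gleasonDist φ ψ < 2}

/-- The pseudo-hyperbolic distance `ρ(φ, ψ)`. -/
def pseudoDist {X : Type*} [NormedAddCommGroup X] [NormedSpace ℂ X]
    (φ ψ : SpectrumAu X) : ℝ :=
  sSup {r : ℝ | ∃ (f : X → ℂ) (hf : MemAu X f),
    (∀ x ∈ closedBall (0 : X) 1, ‖f x‖ ≤ 1) ∧ ψ.toFun f hf = 0 ∧ r = ‖φ.toFun f hf‖}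

/-- Membership in the fiber `ℳ_z` over a point `z` of `X`. -/
def memFiber {X : Type*} [NormedAddCommGroup X] [NormedSpace ℂ X]
    (φ : SpectrumAu X) (z : X) : Prop :=
  ∀ (x' : X →L[ℂ] ℂ) (h : MemAu X ⇑x'), φ.toFun ⇑x' h = x' z

/-- The set of weak-star accumulation points of a family in the spectrum. -/
def wStarAccPts {X : Type*} [NormedAddCommGroup X] [NormedSpace ℂ X]
    {ι : Type*} (l : Filter ι) (Φ : ι → SpectrumAu X) : Set (SpectrumAu X) :=
  {ψ | ∀ (F : Finset (X → ℂ)) (hF : ∀ f ∈ F, MemAu X f) (ε : ℝ), 0 < ε →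
    ∃ᶠ i in l, ∀ f, ∀ hf : f ∈ F,
      ‖(Φ i).toFun f (hF f hf) - ψ.toFun f (hF f hf)‖ < ε}

/-- Weak-star convergence of a net in the spectrum. -/
def WStarTendsto {X : Type*} [NormedAddCommGroup X] [NormedSpace ℂ X]
    {ι : Type*} (l : Filter ι) (Φ : ι → SpectrumAu X) (ψ : SpectrumAu X) : Prop :=
  ∀ (f : X → ℂ) (hf : MemAu X f),
    Tendsto (fun i => (Φ i).toFun f hf) l (𝓝 (ψ.toFun f hf))

/-- Membership in the weak-star closure of the set of evaluations at points of the
open unit ball. -/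
def inWStarClosureOfEvals {X : Type*} [NormedAddCommGroup X] [NormedSpace ℂ X]
    (ψ : SpectrumAu X) : Prop :=
  ∀ (F : Finset (X → ℂ)) (hF : ∀ f ∈ F, MemAu X f) (ε : ℝ), 0 < ε →
    ∃ x : X, ‖x‖ < 1 ∧ ∀ f, ∀ hf : f ∈ F,
      ‖(evalHom x).toFun f (hF f hf) - ψ.toFun f (hF f hf)‖ < ε

/-- `φ` is a strong boundary point: for every (basic) weak-star neighborhood `U` of
`φ` there is `f ∈ 𝒜_u(B_X)` with `‖f‖ = 1 = φ(f)` and `|ψ(f)| < 1` for `ψ ∉ U`. -/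
def IsStrongBoundaryPoint {X : Type*} [NormedAddCommGroup X] [NormedSpace ℂ X]
    (φ : SpectrumAu X) : Prop :=
  ∀ (F : Finset (X → ℂ)) (hF : ∀ f ∈ F, MemAu X f) (ε : ℝ), 0 < ε →
    ∃ (g : X → ℂ) (hg : MemAu X g),
      (∀ x ∈ closedBall (0 : X) 1, ‖g x‖ ≤ 1) ∧ φ.toFun g hg = 1 ∧
      ∀ ψ : SpectrumAu X,
        (∃ f, ∃ hf : f ∈ F, ε ≤ ‖ψ.toFun f (hF f hf) - φ.toFun f (hF f hf)‖) →
        ‖ψ.toFun g hg‖ < 1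

/-- The radius function `R(φ)`. -/
def radiusFn {X : Type*} [NormedAddCommGroup X] [NormedSpace ℂ X]
    (φ : SpectrumAu X) : ℝ :=
  sInf {r : ℝ | 0 < r ∧ r ≤ 1 ∧ ∀ (f : X → ℂ) (hf : MemAu X f) (C : ℝ),
    (∀ x ∈ ball (0 : X) r, ‖f x‖ ≤ C) → ‖φ.toFun f hf‖ ≤ C}

/-- A continuous `k`-homogeneous polynomial: `P x = A(x, …, x)` for a continuous
symmetric `k`-linear form `A`. -/
def IsHomogPoly (X : Type*) [NormedAddCommGroup X] [NormedSpace ℂ X]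
    (k : ℕ) (P : X → ℂ) : Prop :=
  ∃ A : ContinuousMultilinearMap ℂ (fun _ : Fin k => X) ℂ,
    (∀ (v : Fin k → X) (σ : Equiv.Perm (Fin k)), A (v ∘ σ) = A v) ∧
    ∀ x, P x = A fun _ => x

/-- The supremum norm of a polynomial over the closed unit ball. -/
def polyNorm (X : Type*) [NormedAddCommGroup X] [NormedSpace ℂ X] (P : X → ℂ) : ℝ :=
  sSup {r : ℝ | ∃ x : X, ‖x‖ ≤ 1 ∧ r = ‖P x‖}

/-- The truncation `z[n] = (z 0, …, z (n-1), 0, 0, …)` of an element of `ℓ_p`. -/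
def lpTrunc (p : ℝ≥0∞) (z : lp (fun _ : ℕ => ℂ) p) (n : ℕ) : lp (fun _ : ℕ => ℂ) p :=
  ∑ i ∈ Finset.range n, lp.single p i (z i)

/-- The canonical unit vector `e_n` of `ℓ_p`. -/
def lpUnit (p : ℝ≥0∞) (n : ℕ) : lp (fun _ : ℕ => ℂ) p := lp.single p n 1

/-- The 4-homogeneous polynomial `Q x = Σ_{i<j} (x i * x j)^2` on `ℓ_1`. -/
def Qpoly (x : lp (fun _ : ℕ => ℂ) 1) : ℂ :=
  ∑' q : {q : ℕ × ℕ // q.1 < q.2}, (x q.1.1 * x q.1.2) ^ 2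

/-- The characteristic sequence `1_M` of a set `M ⊆ ℕ`, as an element of `ℓ_∞`. -/
def indicatorSeq (M : Set ℕ) : lp (fun _ : ℕ => ℂ) ⊤ :=
  ⟨M.indicator fun _ => (1 : ℂ), memℓp_infty (by
    refine ⟨1, ?_⟩
    rintro r ⟨i, rfl⟩
    by_cases h : i ∈ M <;> simp [h])⟩

/-- Membership in the fiber `ℳ_{z''}` over `z'' ∈ ℓ_1'' = (ℓ_∞)'`, where the dual of
`ℓ_1` is identified with `ℓ_∞` via the pairing `(y, x) ↦ Σ_i y i * x i`. -/
def memFiberL1 (φ : SpectrumAu (lp (fun _ : ℕ => ℂ) 1))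
    (z'' : lp (fun _ : ℕ => ℂ) ⊤ →L[ℂ] ℂ) : Prop :=
  ∀ (y : lp (fun _ : ℕ => ℂ) ⊤)
    (h : MemAu (lp (fun _ : ℕ => ℂ) 1) fun x => ∑' i, y i * x i),
    φ.toFun (fun x => ∑' i, y i * x i) h = z'' y

/-! The truncations `z[n]` converge to `z`, so `‖(z[n] + s e_m) - (z[m] + s e_m)‖ → 0` as
`m ≥ n → ∞`. Every `f ∈ 𝒜_u(B_{ℓ_p})` is uniformly continuous on the closed ball, hence an
accumulation point of `δ_{z[n] + s e_m}` is one of `δ_{z[m] + s e_m}`. Conversely, the diagonal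
family is the subfamily `n = m` of the doubly indexed one. The condition `‖z‖^p + s^p ≤ 1` keeps
all points in the closed unit ball, where `evalHom x` really is evaluation at `x`. -/

theorem UniformContinuousOn.tendsto_dist_comp {α β ι : Type*} [PseudoMetricSpace α]
    [PseudoMetricSpace β] {f : α → β} {s : Set α} (hf : UniformContinuousOn f s)
    {l : Filter ι} {u v : ι → α} (hu : ∀ i, u i ∈ s) (hv : ∀ i, v i ∈ s)
    (huv : Tendsto (fun i => dist (u i) (v i)) l (𝓝 0)) :
    Tendsto (fun i => dist (f (u i)) (f (v i))) l (𝓝 0) := by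
  have huv' : Tendsto (fun i => (u i, v i)) l (uniformity α ⊓ 𝓟 (s ×ˢ s)) :=
    tendsto_inf.2 ⟨tendsto_uniformity_iff_dist_tendsto_zero.2 huv,
      tendsto_principal.2 (Eventually.of_forall fun i => ⟨hu i, hv i⟩)⟩
  exact tendsto_uniformity_iff_dist_tendsto_zero.1 (Tendsto.comp hf huv')

section Spectrum

variable {X : Type*} [NormedAddCommGroup X] [NormedSpace ℂ X]

theorem evalHom_toFun {x : X} (hx : ‖x‖ ≤ 1) (f : X → ℂ) (hf : MemAu X f) :
    (evalHom x).toFun f hf = f x := by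
  rw [evalHom, dif_pos hx]
  rfl

theorem wStarAccPts_comp_subset {ι κ : Type*} {l : Filter ι} {l' : Filter κ} {g : ι → κ}
    (hg : Tendsto g l l') (Φ : κ → SpectrumAu X) :
    wStarAccPts l (Φ ∘ g) ⊆ wStarAccPts l' Φ :=
  fun _ hψ F hF ε hε => hg.frequently (hψ F hF ε hε)

theorem wStarAccPts_subset_of_tendsto_dist {ι : Type*} {l : Filter ι}
    {Φ Ψ : ι → SpectrumAu X}
    (h : ∀ f hf, Tendsto (fun i => dist ((Φ i).toFun f hf) ((Ψ i).toFun f hf)) l (𝓝 0)) :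
    wStarAccPts l Φ ⊆ wStarAccPts l Ψ := by
  intro ψ hψ F hF ε hε
  have hclose : ∀ᶠ i in l, ∀ f : F,
      dist ((Φ i).toFun f (hF f f.2)) ((Ψ i).toFun f (hF f f.2)) < ε / 2 :=
    eventually_all.2 fun f => (h f (hF f f.2)).eventually_lt_const (half_pos hε)
  refine ((hψ F hF (ε / 2) (half_pos hε)).and_eventually hclose).mono
    fun i ⟨hΦψ, hΦΨ⟩ f hf => ?_
  simp only [← dist_eq_norm] at hΦψ ⊢
  calc dist ((Ψ i).toFun f (hF f hf)) (ψ.toFun f (hF f hf))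
      ≤ dist ((Φ i).toFun f (hF f hf)) ((Ψ i).toFun f (hF f hf))
        + dist ((Φ i).toFun f (hF f hf)) (ψ.toFun f (hF f hf)) := dist_triangle_left _ _ _
    _ < ε / 2 + ε / 2 := add_lt_add (hΦΨ ⟨f, hf⟩) (hΦψ f hf)
    _ = ε := add_halves ε

theorem wStarAccPts_evalHom_subset_of_tendsto_dist {ι : Type*} {l : Filter ι} {x y : ι → X}
    (hx : ∀ i, ‖x i‖ ≤ 1) (hy : ∀ i, ‖y i‖ ≤ 1)
    (hxy : Tendsto (fun i => dist (x i) (y i)) l (𝓝 0)) :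
    wStarAccPts l (fun i => evalHom (x i)) ⊆ wStarAccPts l (fun i => evalHom (y i)) :=
  wStarAccPts_subset_of_tendsto_dist fun f hf => by
    simp only [evalHom_toFun, hx, hy]
    exact hf.2.tendsto_dist_comp (fun i => mem_closedBall_zero_iff.2 (hx i))
      (fun i => mem_closedBall_zero_iff.2 (hy i)) hxy

end Spectrum

theorem lp.norm_add_rpow_of_disjoint {α : Type*} {E : α → Type*} [∀ i, NormedAddCommGroup (E i)]
    {p : ℝ≥0∞} (hp : 0 < p.toReal) {f g : lp E p} (hfg : ∀ i, f i = 0 ∨ g i = 0) :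
    ‖f + g‖ ^ p.toReal = ‖f‖ ^ p.toReal + ‖g‖ ^ p.toReal := by
  have hpointwise : ∀ i, ‖(f + g) i‖ ^ p.toReal = ‖f i‖ ^ p.toReal + ‖g i‖ ^ p.toReal := by
    intro i
    rcases hfg i with h | h <;> simp [h, Real.zero_rpow hp.ne']
  rw [lp.norm_rpow_eq_tsum hp, lp.norm_rpow_eq_tsum hp, lp.norm_rpow_eq_tsum hp,
    tsum_congr hpointwise, ((lp.memℓp f).summable hp).tsum_add ((lp.memℓp g).summable hp)]

section Truncation

variable {p : ℝ≥0∞}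

theorem lpTrunc_apply (z : lp (fun _ : ℕ => ℂ) p) (n i : ℕ) :
    lpTrunc p z n i = if i < n then z i else 0 := by
  simp only [lpTrunc, lp.coeFn_sum, Finset.sum_apply, lp.single_apply, Pi.single_apply,
    Finset.sum_ite_eq, Finset.mem_range]

theorem norm_lpTrunc_le [Fact (1 ≤ p)] (hp : 0 < p.toReal) (z : lp (fun _ : ℕ => ℂ) p) (n : ℕ) :
    ‖lpTrunc p z n‖ ≤ ‖z‖ := by
  have hle : ∀ i, ‖lpTrunc p z n i‖ ≤ ‖z i‖ := fun i => by
    rw [lpTrunc_apply]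
    split_ifs <;> simp
  refine lp.norm_le_of_forall_sum_le hp (norm_nonneg z) fun t => ?_
  exact (Finset.sum_le_sum fun i _ => Real.rpow_le_rpow (norm_nonneg _) (hle i) hp.le).trans
    (lp.sum_rpow_le_norm_rpow hp z t)

theorem tendsto_lpTrunc [Fact (1 ≤ p)] (hp : p ≠ ⊤) (z : lp (fun _ : ℕ => ℂ) p) :
    Tendsto (lpTrunc p z) atTop (𝓝 z) :=
  (lp.hasSum_single hp z).tendsto_sum_nat

theorem norm_lpTrunc_add_smul_lpUnit_le_one [Fact (1 ≤ p)] (hp : 0 < p.toReal)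
    (z : lp (fun _ : ℕ => ℂ) p) {s : ℝ} (hs : 0 < s)
    (hzs : ‖z‖ ^ p.toReal + s ^ p.toReal ≤ 1) {n m : ℕ} (hnm : n ≤ m) :
    ‖lpTrunc p z n + (s : ℂ) • lpUnit p m‖ ≤ 1 := by
  have hdisjoint : ∀ i, lpTrunc p z n i = 0 ∨ ((s : ℂ) • lpUnit p m) i = 0 := by
    intro i
    by_cases hi : i < n
    · right
      rw [lp.coeFn_smul, Pi.smul_apply, lpUnit, lp.single_apply_ne p m _ (by omega), smul_zero]
    · left
      simp [lpTrunc_apply, hi]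
  have hunit : ‖(s : ℂ) • lpUnit p m‖ = s := by
    rw [norm_smul, lpUnit, lp.norm_single (ENNReal.toReal_pos_iff.1 hp).1, norm_one, mul_one,
      Complex.norm_real, Real.norm_of_nonneg hs.le]
  have hrpow : ‖lpTrunc p z n + (s : ℂ) • lpUnit p m‖ ^ p.toReal ≤ 1 ^ p.toReal := by
    rw [lp.norm_add_rpow_of_disjoint hp hdisjoint, hunit, Real.one_rpow]
    exact le_trans (by gcongr; exact norm_lpTrunc_le hp z n) hzs
  exact (Real.rpow_le_rpow_iff (norm_nonneg _) zero_le_one hp).1 hrpow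

end Truncation

theorem tendsto_val_atTop_prod_atTop (k : ℕ) :
    Tendsto (fun q : {q : ℕ × ℕ // k ≤ q.1 ∧ q.1 ≤ q.2} => q.1) atTop (atTop ×ˢ atTop) := by
  rw [prod_atTop_atTop_eq]
  exact tendsto_atTop_atTop_of_monotone (fun _ _ h => h) fun n =>
    ⟨⟨(k + n.1 + n.2, k + n.1 + n.2), by omega, le_rfl⟩, by dsimp only; omega,
      by dsimp only; omega⟩

theorem accPts_pairs_eq_accPts_diagonal_general
    (p : ℝ≥0∞) [Fact (1 ≤ p)] (hptop : p ≠ ⊤)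
    (z : lp (fun _ : ℕ => ℂ) p)
    (s : ℝ) (hspos : 0 < s) (hzs : ‖z‖ ^ p.toReal + s ^ p.toReal ≤ 1) :
    wStarAccPts (atTop : Filter {q : ℕ × ℕ // 1 ≤ q.1 ∧ q.1 ≤ q.2})
        (fun q => evalHom (lpTrunc p z q.1.1 + (s : ℂ) • lpUnit p q.1.2)) =
      wStarAccPts (atTop : Filter {n : ℕ // 1 ≤ n})
        (fun n => evalHom (lpTrunc p z n.1 + (s : ℂ) • lpUnit p n.1)) := by
  have hp : 0 < p.toReal := ENNReal.toReal_pos (one_pos.trans_le Fact.out).ne' hptop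
  have hball {n m : ℕ} (hnm : n ≤ m) : ‖lpTrunc p z n + (s : ℂ) • lpUnit p m‖ ≤ 1 :=
    norm_lpTrunc_add_smul_lpUnit_le_one hp z hspos hzs hnm
  let diag (n : {n : ℕ // 1 ≤ n}) : {q : ℕ × ℕ // 1 ≤ q.1 ∧ q.1 ≤ q.2} := ⟨(n, n), n.2, le_rfl⟩
  let snd (q : {q : ℕ × ℕ // 1 ≤ q.1 ∧ q.1 ≤ q.2}) : {n : ℕ // 1 ≤ n} :=
    ⟨q.1.2, q.2.1.trans q.2.2⟩
  have hdiag : Tendsto diag atTop atTop := tendsto_atTop_atTop_of_monotone (fun _ _ h => ⟨h, h⟩)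
    fun q => ⟨⟨max q.1.1 q.1.2, q.2.1.trans (le_max_left _ _)⟩, le_max_left _ _, le_max_right _ _⟩
  have hsnd : Tendsto snd atTop atTop :=
    tendsto_atTop_atTop_of_monotone (fun _ _ h => h.2) fun n => ⟨diag n, le_rfl⟩
  have htrunc := (((tendsto_lpTrunc hptop z).comp tendsto_fst).dist
    ((tendsto_lpTrunc hptop z).comp tendsto_snd)).comp (tendsto_val_atTop_prod_atTop 1)
  set Φ := fun q : {q : ℕ × ℕ // 1 ≤ q.1 ∧ q.1 ≤ q.2} =>
    evalHom (lpTrunc p z q.1.1 + (s : ℂ) • lpUnit p q.1.2)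
  set Ψ := fun n : {n : ℕ // 1 ≤ n} => evalHom (lpTrunc p z n.1 + (s : ℂ) • lpUnit p n.1)
  refine Subset.antisymm ?_ (wStarAccPts_comp_subset hdiag Φ)
  calc wStarAccPts atTop Φ ⊆ wStarAccPts atTop (Ψ ∘ snd) :=
        wStarAccPts_evalHom_subset_of_tendsto_dist (fun q => hball q.2.2) (fun _ => hball le_rfl)
          (by simpa only [snd, dist_add_right, dist_self, Function.comp_def] using htrunc)
    _ ⊆ wStarAccPts atTop Ψ := wStarAccPts_comp_subset hsnd Ψ

/-- For `1 < p < ∞`, `z ∈ B_{ℓ_p}` and `s > 0` with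
`‖z‖^p + s^p ≤ 1`, the weak-star accumulation points of the doubly indexed family
`{δ_{z[n] + s e_m} : m > n ≥ 1}` coincide with those of the family
`{δ_{z[m-1] + s e_m} : m ≥ 2}` (all indices written here in `0`-based form). -/
theorem accPts_pairs_eq_accPts_diagonal
    (p : ℝ≥0∞) [Fact (1 ≤ p)] (hp : 1 < p) (hptop : p ≠ ⊤)
    (z : lp (fun _ : ℕ => ℂ) p) (hz : ‖z‖ < 1)
    (s : ℝ) (hspos : 0 < s) (hzs : ‖z‖ ^ p.toReal + s ^ p.toReal ≤ 1) :
    wStarAccPts (atTop : Filter {q : ℕ × ℕ // 1 ≤ q.1 ∧ q.1 ≤ q.2})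
        (fun q => evalHom (lpTrunc p z q.1.1 + (s : ℂ) • lpUnit p q.1.2)) =
      wStarAccPts (atTop : Filter {n : ℕ // 1 ≤ n})
        (fun n => evalHom (lpTrunc p z n.1 + (s : ℂ) • lpUnit p n.1)) :=
  accPts_pairs_eq_accPts_diagonal_general p hptop z s hspos hzs
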